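/- arXiv:1611.00507 — 3 statements merged into one kernel-verified Lean document; each statement's English description precedes it below -/
import Mathlib

section
/- (Theorem 1, simultaneous update.) Let K ⊆ ℝⁿ be a closed convex cone with dual cone K*, and let ψ : ℝⁿ → ℝ be concave with ψ(0) = 0 satisfying Assumption 1 on K. For t ∈ {1,…,m} let F_t ⊆ ℝᵏ and let A_t : ℝᵏ → ℝⁿ be linear with A_t x ∈ K for every x ∈ F_t. Suppose x̃_t ∈ F_t and ỹ_t ∈ ℝⁿ satisfy: ỹ_t is a supergradient of ψ at u_t := ∑_{s=1}^t A_s x̃_s, and ⟨x̃_t, A_tᵀ ỹ_t⟩ ≥ ⟨x, A_tᵀ ỹ_t⟩ for all x ∈ F_t. Let ỹ_{m+1} be a supergradient of ψ at u_m such that z − ỹ_{m+1} ∈ K* for every supergradient z of ψ at u_m. Let ᾱ ∈ ℝ satisfy ⟨y, u⟩ ≥ (ᾱ + 1)·ψ(u) for every u ∈ K and every supergradient y of ψ at u. Then for every choice of x'_t ∈ F_t (t ∈ {1,…,m}) and every w ∈ ℝⁿ: (1 − ᾱ)·ψ(u_m) ≥ ∑_{t=1}^m ⟨A_t x'_t,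 ỹ_{m+1}⟩ − ⟨ỹ_{m+1}, w⟩ + ψ(w). (Taking suprema over x'_t and infimum over w, this says P_sim ≥ D★/(1 − ᾱ_ψ), where D★ is the optimal value of the Fenchel dual ∑_t σ_t(A_tᵀ y) − ψ*(y).) -/
open RealInnerProductSpace

/-- `y` is a supergradient of `ψ` at `u`. -/
def IsSupergradient {n : ℕ} (ψ : EuclideanSpace ℝ (Fin n) → ℝ)
    (u y : EuclideanSpace ℝ (Fin n)) : Prop :=
  ∀ u', ψ u' ≤ ψ u + ⟪y, u' - u⟫

/-- The dual cone of a set `K`. -/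
def dualCone {n : ℕ} (K : Set (EuclideanSpace ℝ (Fin n))) :
    Set (EuclideanSpace ℝ (Fin n)) :=
  {y | ∀ u ∈ K, 0 ≤ ⟪y, u⟫}

/-- Assumption 1 of the paper. -/
def Assumption1 {n : ℕ} (K : Set (EuclideanSpace ℝ (Fin n)))
    (ψ : EuclideanSpace ℝ (Fin n) → ℝ) : Prop :=
  ∀ u ∈ K, ∀ v ∈ K, u - v ∈ K →
    ∃ y, IsSupergradient ψ u y ∧
      ∀ z, IsSupergradient ψ v z → z - y ∈ dualCone K

/-!
Along the run, the partial sums `u t` increase in the cone order, so Assumption 1 together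
with the minimality of `ỹ_{m+1}` gives `ỹ_t ⪰ ỹ_{m+1}` in the dual order. Hence
`⟨A_t x'_t, ỹ_{m+1}⟩ ≤ ⟨A_t x'_t, ỹ_t⟩ ≤ ⟨A_t x̃_t, ỹ_t⟩ ≤ ψ(u_t) - ψ(u_{t-1})`, and summing
telescopes to `ψ(u_m)`. The supergradient inequality at `u_m` bounds `ψ(w) - ⟨ỹ_{m+1}, w⟩` by
`ψ(u_m) - ⟨ỹ_{m+1}, u_m⟩`, and the definition of `ᾱ` bounds `⟨ỹ_{m+1}, u_m⟩` from below.
-/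

section Cone

variable {E : Type*} [AddCommGroup E] [Module ℝ E] {K : Set E}

theorem add_mem_of_convex_of_smul_mem (hKconvex : Convex ℝ K)
    (hKcone : ∀ c : ℝ, 0 < c → ∀ u ∈ K, c • u ∈ K) {a b : E} (ha : a ∈ K) (hb : b ∈ K) :
    a + b ∈ K := by
  have hmid : (1 / 2 : ℝ) • a + (1 / 2 : ℝ) • b ∈ K :=
    hKconvex ha hb (by norm_num) (by norm_num) (by norm_num)
  convert hKcone 2 two_pos _ hmid using 1
  rw [smul_add, smul_smul, smul_smul]
  norm_num

theorem sum_range_sub_sum_range_mem_of_convex_of_smul_mem (hKconvex : Convex ℝ K)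
    (hKcone : ∀ c : ℝ, 0 < c → ∀ u ∈ K, c • u ∈ K) {d : ℕ → E} {a b : ℕ}
    (hd : ∀ t < b, d t ∈ K) (hab : a < b) :
    ∑ s ∈ Finset.range b, d s - ∑ s ∈ Finset.range a, d s ∈ K := by
  rw [← Finset.sum_Ico_eq_sub _ hab.le]
  refine Finset.sum_induction_nonempty _ (· ∈ K)
    (fun _ _ ↦ add_mem_of_convex_of_smul_mem hKconvex hKcone) (by simpa using hab) ?_
  intro t ht
  exact hd t (Finset.mem_Ico.mp ht).2

end Cone

section Supergradient

variable {n : ℕ} {ψ : EuclideanSpace ℝ (Fin n) → ℝ} {K : Set (EuclideanSpace ℝ (Fin n))}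

theorem IsSupergradient.sub_le_inner {u y : EuclideanSpace ℝ (Fin n)}
    (hy : IsSupergradient ψ u y) (v : EuclideanSpace ℝ (Fin n)) :
    ψ v - ψ u ≤ ⟪y, v - u⟫ := by
  linarith [hy v]

theorem add_mem_dualCone {y z : EuclideanSpace ℝ (Fin n)} (hy : y ∈ dualCone K)
    (hz : z ∈ dualCone K) : y + z ∈ dualCone K := fun u hu ↦ by
  rw [inner_add_left]
  exact add_nonneg (hy u hu) (hz u hu)

theorem inner_le_inner_of_sub_mem_dualCone {a y z : EuclideanSpace ℝ (Fin n)} (ha : a ∈ K)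
    (hyz : z - y ∈ dualCone K) : ⟪a, y⟫ ≤ ⟪a, z⟫ := by
  have := hyz a ha
  rw [inner_sub_left, real_inner_comm a y, real_inner_comm a z] at this
  linarith

theorem sub_mem_dualCone_of_assumption1 (hassum : Assumption1 K ψ)
    {u v ylast z : EuclideanSpace ℝ (Fin n)} (hu : u ∈ K) (hv : v ∈ K) (huv : u - v ∈ K)
    (hylastmin : ∀ z, IsSupergradient ψ u z → z - ylast ∈ dualCone K)
    (hz : IsSupergradient ψ v z) : z - ylast ∈ dualCone K := by
  obtain ⟨y, hy, hyv⟩ := hassum u hu v hv huv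
  simpa using add_mem_dualCone (hyv z hz) (hylastmin y hy)

theorem sum_inner_le_sub_of_isSupergradient {m : ℕ} {u d y : ℕ → EuclideanSpace ℝ (Fin n)}
    (hu : ∀ t, u (t + 1) = u t + d t) (hy : ∀ t < m, IsSupergradient ψ (u (t + 1)) (y t)) :
    ∑ t ∈ Finset.range m, ⟪d t, y t⟫ ≤ ψ (u m) - ψ (u 0) := by
  rw [← Finset.sum_range_sub (fun t ↦ ψ (u t))]
  refine Finset.sum_le_sum fun t ht ↦ ?_
  have := (hy t (Finset.mem_range.mp ht)).sub_le_inner (u t)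
  rw [hu t] at this ⊢
  rw [sub_add_cancel_left, inner_neg_right, real_inner_comm] at this
  linarith

end Supergradient

/-- Indices are 0-based: `u t` is the sum of the first `t` terms `A s (xt s)`, and `yt t` is
a supergradient at `u (t+1)`. -/
theorem stmt_3_general {n k m : ℕ}
    (K : Set (EuclideanSpace ℝ (Fin n)))
    (hKconvex : Convex ℝ K)
    (hKcone : ∀ c : ℝ, 0 < c → ∀ u ∈ K, c • u ∈ K)
    (ψ : EuclideanSpace ℝ (Fin n) → ℝ)
    (hψ0 : ψ 0 = 0)
    (hassum : Assumption1 K ψ)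
    (F : ℕ → Set (EuclideanSpace ℝ (Fin k)))
    (A : ℕ → EuclideanSpace ℝ (Fin k) →ₗ[ℝ] EuclideanSpace ℝ (Fin n))
    (hA : ∀ t < m, ∀ x ∈ F t, A t x ∈ K)
    (xt : ℕ → EuclideanSpace ℝ (Fin k))
    (hxt : ∀ t < m, xt t ∈ F t)
    (u : ℕ → EuclideanSpace ℝ (Fin n))
    (hu : ∀ t, u t = ∑ s ∈ Finset.range t, A s (xt s))
    (yt : ℕ → EuclideanSpace ℝ (Fin n))
    (hyt : ∀ t < m, IsSupergradient ψ (u (t + 1)) (yt t))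
    (hmax : ∀ t < m, ∀ x ∈ F t, ⟪A t x, yt t⟫ ≤ ⟪A t (xt t), yt t⟫)
    (ylast : EuclideanSpace ℝ (Fin n))
    (hylast : IsSupergradient ψ (u m) ylast)
    (hylastmin : ∀ z, IsSupergradient ψ (u m) z → z - ylast ∈ dualCone K)
    (α : ℝ)
    (hα : ∀ v ∈ K, ∀ y, IsSupergradient ψ v y → (α + 1) * ψ v ≤ ⟪y, v⟫)
    (x' : ℕ → EuclideanSpace ℝ (Fin k))
    (hx' : ∀ t < m, x' t ∈ F t)
    (w : EuclideanSpace ℝ (Fin n)) :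
    (∑ t ∈ Finset.range m, ⟪A t (x' t), ylast⟫) - ⟪ylast, w⟫ + ψ w ≤
      (1 - α) * ψ (u m) := by
  have hu0 : u 0 = 0 := by simp [hu 0]
  have hu_sub : ∀ {a b}, a < b → b ≤ m → u b - u a ∈ K := fun hab hbm ↦ by
    rw [hu, hu]
    exact sum_range_sub_sum_range_mem_of_convex_of_smul_mem hKconvex hKcone
      (fun t ht ↦ hA t (by omega) _ (hxt t (by omega))) hab
  have huK : ∀ {b}, 0 < b → b ≤ m → u b ∈ K := fun hb hbm ↦ by
    simpa [hu0] using hu_sub hb hbm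
  have hyt_ge : ∀ t < m, yt t - ylast ∈ dualCone K := fun t ht ↦ by
    -- `K` need not contain `0`, so Assumption 1 is only applied for `t + 1 < m`.
    rcases (Nat.succ_le_of_lt ht).lt_or_eq with hlt | rfl
    · exact sub_mem_dualCone_of_assumption1 hassum (huK (by omega) le_rfl)
        (huK t.succ_pos hlt.le) (hu_sub hlt le_rfl) hylastmin (hyt t ht)
    · exact hylastmin _ (hyt t ht)
  have hsum : ∑ t ∈ Finset.range m, ⟪A t (x' t), ylast⟫ ≤ ψ (u m) := by
    calc ∑ t ∈ Finset.range m, ⟪A t (x' t), ylast⟫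
        ≤ ∑ t ∈ Finset.range m, ⟪A t (xt t), yt t⟫ := Finset.sum_le_sum fun t ht ↦ by
          have ht := Finset.mem_range.mp ht
          exact (inner_le_inner_of_sub_mem_dualCone (hA t ht _ (hx' t ht)) (hyt_ge t ht)).trans
            (hmax t ht _ (hx' t ht))
      _ ≤ ψ (u m) - ψ (u 0) := sum_inner_le_sub_of_isSupergradient
          (fun t ↦ by rw [hu, hu, Finset.sum_range_succ]) hyt
      _ = ψ (u m) := by rw [hu0, hψ0, sub_zero]
  have hw : ψ w - ψ (u m) ≤ ⟪ylast, w⟫ - ⟪ylast, u m⟫ := by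
    simpa only [inner_sub_right] using hylast.sub_le_inner w
  have hαu : (α + 1) * ψ (u m) ≤ ⟪ylast, u m⟫ := by
    rcases m.eq_zero_or_pos with rfl | hm
    · rw [hu0, hψ0, inner_zero_right, mul_zero]
    · exact hα _ (huK hm le_rfl) _ hylast
  linarith

/-- Theorem 1, simultaneous update: `(1 − ᾱ)·ψ(u_m)` dominates the dual
objective evaluated at `ỹ_{m+1}`.  All indices are 0-based: `u t` is the sum
of the first `t` terms `A s (xt s)`, and `yt t` is a supergradient at
`u (t+1)`. -/
theorem stmt_3 {n k m : ℕ}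
    (K : Set (EuclideanSpace ℝ (Fin n)))
    (hKclosed : IsClosed K) (hKconvex : Convex ℝ K)
    (hKcone : ∀ c : ℝ, 0 < c → ∀ u ∈ K, c • u ∈ K)
    (ψ : EuclideanSpace ℝ (Fin n) → ℝ)
    (hψ : ConcaveOn ℝ Set.univ ψ) (hψ0 : ψ 0 = 0)
    (hassum : Assumption1 K ψ)
    (F : ℕ → Set (EuclideanSpace ℝ (Fin k)))
    (A : ℕ → EuclideanSpace ℝ (Fin k) →ₗ[ℝ] EuclideanSpace ℝ (Fin n))
    (hA : ∀ t < m, ∀ x ∈ F t, A t x ∈ K)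
    (xt : ℕ → EuclideanSpace ℝ (Fin k))
    (hxt : ∀ t < m, xt t ∈ F t)
    (u : ℕ → EuclideanSpace ℝ (Fin n))
    (hu : ∀ t, u t = ∑ s ∈ Finset.range t, A s (xt s))
    (yt : ℕ → EuclideanSpace ℝ (Fin n))
    (hyt : ∀ t < m, IsSupergradient ψ (u (t + 1)) (yt t))
    (hmax : ∀ t < m, ∀ x ∈ F t, ⟪A t x, yt t⟫ ≤ ⟪A t (xt t), yt t⟫)
    (ylast : EuclideanSpace ℝ (Fin n))
    (hylast : IsSupergradient ψ (u m) ylast)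
    (hylastmin : ∀ z, IsSupergradient ψ (u m) z → z - ylast ∈ dualCone K)
    (α : ℝ)
    (hα : ∀ v ∈ K, ∀ y, IsSupergradient ψ v y → (α + 1) * ψ v ≤ ⟪y, v⟫)
    (x' : ℕ → EuclideanSpace ℝ (Fin k))
    (hx' : ∀ t < m, x' t ∈ F t)
    (w : EuclideanSpace ℝ (Fin n)) :
    (∑ t ∈ Finset.range m, ⟪A t (x' t), ylast⟫) - ⟪ylast, w⟫ + ψ w ≤
      (1 - α) * ψ (u m) :=
  stmt_3_general K hKconvex hKcone ψ hψ0 hassum F A hA xt hxt u hu yt hyt hmax ylast hylast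
    hylastmin α hα x' hx' w
end

section
/- Let K ⊆ ℝⁿ be a closed convex cone with dual cone K*, and let ψ : ℝⁿ → ℝ be concave satisfying Assumption 1 on K. For t ∈ {1,…,m} let v_t ∈ K and set u_t = v₁ + ⋯ + v_t; suppose ỹ_t is a supergradient of ψ at u_t for each t ∈ {1,…,m}, and let ỹ_{m+1} be a supergradient of ψ at u_m such that z − ỹ_{m+1} ∈ K* for every supergradient z of ψ at u_m. Then for every t ∈ {1,…,m}, ỹ_t − ỹ_{m+1} ∈ K*; consequently, for any linear map A : ℝᵏ → ℝⁿ and any x ∈ ℝᵏ with A x ∈ K, ⟨A x, ỹ_{m+1}⟩ ≤ ⟨A x, ỹ_t⟩. (This is the key monotonicity step in the proof of Theorem 1, giving ∑_t σ_t(A_tᵀ ỹ_t) ≥ ∑_t σ_t(A_tᵀ ỹ_{m+1}) and hence D_sim ≥ D★.) -/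
open RealInnerProductSpace

/-! The inequalities `a - b ∈ K*` chain because `K*` is closed under addition. For `t < m`,
Assumption 1 applied to `u_m − u_t = v_{t+1} + ⋯ + v_m ∈ K` yields a supergradient at `u_m`
lying between `ỹ_t` and `ỹ_{m+1}`; for `t = m`, `ỹ_m` is itself a supergradient at `u_m`. -/

section ConvexCone

variable {E : Type*} [AddCommGroup E] [Module ℝ E] {K : Set E}

theorem Convex.add_mem_of_smul_mem (hK : Convex ℝ K) (hKsmul : ∀ c : ℝ, 0 < c → ∀ u ∈ K, c • u ∈ K)
    {a b : E} (ha : a ∈ K) (hb : b ∈ K) : a + b ∈ K := by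
  have hmid : (2⁻¹ : ℝ) • a + (2⁻¹ : ℝ) • b ∈ K := hK ha hb (by norm_num) (by norm_num) (by norm_num)
  simpa [smul_add, smul_smul] using hKsmul 2 two_pos _ hmid

theorem Convex.sum_mem_of_smul_mem (hK : Convex ℝ K)
    (hKsmul : ∀ c : ℝ, 0 < c → ∀ u ∈ K, c • u ∈ K) {ι : Type*} {s : Finset ι} (hs : s.Nonempty)
    {f : ι → E} (hf : ∀ i ∈ s, f i ∈ K) : ∑ i ∈ s, f i ∈ K :=
  Finset.sum_induction_nonempty f (· ∈ K) (fun _ _ => hK.add_mem_of_smul_mem hKsmul) hs hf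

end ConvexCone

section DualCone

variable {n : ℕ} {K : Set (EuclideanSpace ℝ (Fin n))}

theorem sub_mem_dualCone_trans {a b c : EuclideanSpace ℝ (Fin n)} (hab : a - b ∈ dualCone K)
    (hbc : b - c ∈ dualCone K) : a - c ∈ dualCone K := by
  intro w hw
  have hsum := add_nonneg (hab w hw) (hbc w hw)
  rwa [← inner_add_left, sub_add_sub_cancel] at hsum

theorem inner_le_inner_of_sub_mem_dualCone_s7 {a b w : EuclideanSpace ℝ (Fin n)}
    (hab : a - b ∈ dualCone K) (hw : w ∈ K) : ⟪w, b⟫ ≤ ⟪w, a⟫ := by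
  have h := hab w hw
  rw [inner_sub_left, real_inner_comm w a, real_inner_comm w b] at h
  linarith

theorem Assumption1.sub_mem_dualCone {ψ : EuclideanSpace ℝ (Fin n) → ℝ}
    (hassum : Assumption1 K ψ) {u v z ymin : EuclideanSpace ℝ (Fin n)} (hu : u ∈ K) (hv : v ∈ K)
    (huv : u - v ∈ K) (hz : IsSupergradient ψ v z)
    (hymin : ∀ z', IsSupergradient ψ u z' → z' - ymin ∈ dualCone K) : z - ymin ∈ dualCone K := by
  obtain ⟨y, hy, hmono⟩ := hassum u hu v hv huv
  exact sub_mem_dualCone_trans (hmono z hz) (hymin y hy)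

end DualCone

/-- Indices are 0-based: `y t` is a supergradient at `u (t+1)` (i.e. `ỹₜ` at `uₜ` in 1-based
indexing). -/
theorem stmt_7_general {n k m : ℕ}
    (K : Set (EuclideanSpace ℝ (Fin n)))
    (hKconvex : Convex ℝ K)
    (hKcone : ∀ c : ℝ, 0 < c → ∀ u ∈ K, c • u ∈ K)
    (ψ : EuclideanSpace ℝ (Fin n) → ℝ)
    (hassum : Assumption1 K ψ)
    (v : ℕ → EuclideanSpace ℝ (Fin n))
    (hv : ∀ t < m, v t ∈ K)
    (u : ℕ → EuclideanSpace ℝ (Fin n))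
    (hu : ∀ t, u t = ∑ s ∈ Finset.range t, v s)
    (y : ℕ → EuclideanSpace ℝ (Fin n))
    (hy : ∀ t < m, IsSupergradient ψ (u (t + 1)) (y t))
    (ylast : EuclideanSpace ℝ (Fin n))
    (hylastmin : ∀ z, IsSupergradient ψ (u m) z → z - ylast ∈ dualCone K) :
    ∀ t < m, y t - ylast ∈ dualCone K ∧
      ∀ (A : EuclideanSpace ℝ (Fin k) →ₗ[ℝ] EuclideanSpace ℝ (Fin n))
        (x : EuclideanSpace ℝ (Fin k)), A x ∈ K →
          ⟪A x, ylast⟫ ≤ ⟪A x, y t⟫ := by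
  intro t ht
  have hmem : y t - ylast ∈ dualCone K := by
    rcases (Nat.succ_le_of_lt ht).eq_or_lt with hlast | hlt
    · exact hylastmin _ (hlast ▸ hy t ht)
    have hpartial : ∀ j ≤ m, 0 < j → u j ∈ K := fun j hj hj0 => by
      rw [hu]
      exact hKconvex.sum_mem_of_smul_mem hKcone (Finset.nonempty_range_iff.mpr hj0.ne')
        fun i hi => hv i ((Finset.mem_range.mp hi).trans_le hj)
    have hincr : u m - u (t + 1) ∈ K := by
      rw [hu, hu, ← Finset.sum_Ico_eq_sub _ hlt.le]
      exact hKconvex.sum_mem_of_smul_mem hKcone (Finset.nonempty_Ico.mpr hlt)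
        fun i hi => hv i (Finset.mem_Ico.mp hi).2
    exact hassum.sub_mem_dualCone (hpartial m le_rfl (by omega)) (hpartial _ ht t.succ_pos)
      hincr (hy t ht) hylastmin
  exact ⟨hmem, fun A x hx => inner_le_inner_of_sub_mem_dualCone_s7 hmem hx⟩

/-- Key monotonicity step of Theorem 1: `ỹₜ − ỹ_{m+1} ∈ K*` and the induced
support-function inequality.  Indices are 0-based: `y t` is a supergradient
at `u (t+1)` (i.e. `ỹₜ` at `uₜ` in 1-based indexing). -/
theorem stmt_7 {n k m : ℕ}
    (K : Set (EuclideanSpace ℝ (Fin n)))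
    (hKclosed : IsClosed K) (hKconvex : Convex ℝ K)
    (hKcone : ∀ c : ℝ, 0 < c → ∀ u ∈ K, c • u ∈ K)
    (ψ : EuclideanSpace ℝ (Fin n) → ℝ)
    (hψ : ConcaveOn ℝ Set.univ ψ)
    (hassum : Assumption1 K ψ)
    (v : ℕ → EuclideanSpace ℝ (Fin n))
    (hv : ∀ t < m, v t ∈ K)
    (u : ℕ → EuclideanSpace ℝ (Fin n))
    (hu : ∀ t, u t = ∑ s ∈ Finset.range t, v s)
    (y : ℕ → EuclideanSpace ℝ (Fin n))
    (hy : ∀ t < m, IsSupergradient ψ (u (t + 1)) (y t))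
    (ylast : EuclideanSpace ℝ (Fin n))
    (hylast : IsSupergradient ψ (u m) ylast)
    (hylastmin : ∀ z, IsSupergradient ψ (u m) z → z - ylast ∈ dualCone K) :
    ∀ t < m, y t - ylast ∈ dualCone K ∧
      ∀ (A : EuclideanSpace ℝ (Fin k) →ₗ[ℝ] EuclideanSpace ℝ (Fin n))
        (x : EuclideanSpace ℝ (Fin k)), A x ∈ K →
          ⟪A x, ylast⟫ ≤ ⟪A x, y t⟫ :=
  stmt_7_general K hKconvex hKcone ψ hassum v hv u hu y hy ylast hylastmin
end

section
/- (Optimal smoothing for adwords with the sequential algorithm.) Let c ≥ 0 be a real number, let β = (1 − e^{−1/(c+1)})⁻¹, and define y : ℝ → ℝ by y(u) = β·max(1 − e^{(u−1)/(1+c)}, 0). Then (y, β) is feasible for the sequential smoothing-design problem for ψ(u) = min(u, 1): for all u ≥ 0 and all s ≥ 0, ∫₀ᵘ y(t) dt + c·(1 − y(u)) ≤ β·min(u, 1) + y(u)·s − min(s, 1). (This yields the competitive ratio 1 − e^{−1/(c+1)} for adwords with bid-to-budget ratio c.) -/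
/-!
Write `a = 1 + c`, `β = (1 - e^{-1/a})⁻¹` and `y(u) = β (1 - e^{(u-1)/a})₊`. On `[0, 1]` the function
`y` solves `a y' = y - β` with `y(1) = 0`, and `β` is chosen so that `y(0) = 1`; integrating, the
constraint is tight in the form `∫₀ᵘ y + c (1 - y(u)) = β min(u, 1) + y(u) - 1` for every `u`.
Since `0 ≤ y(u) ≤ 1` for `u ≥ 0`, it remains to use `ψ*(y) = y - 1` on `[0, 1]`, i.e.
`y - 1 ≤ y s - min(s, 1)`.
-/

open Real

theorem integral_one_sub_exp_sub_one_div {a : ℝ} (ha : a ≠ 0) (v w : ℝ) :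
    ∫ t in v..w, (1 - exp ((t - 1) / a)) =
      w - v - a * (exp ((w - 1) / a) - exp ((v - 1) / a)) := by
  have hderiv (t : ℝ) :
      HasDerivAt (fun t => t - a * exp ((t - 1) / a)) (1 - exp ((t - 1) / a)) t := by
    refine ((hasDerivAt_id t).sub
      ((((hasDerivAt_id t).sub_const 1).div_const a).exp.const_mul a)).congr_deriv ?_
    simp only [id]
    field_simp
  rw [intervalIntegral.integral_eq_sub_of_hasDerivAt (fun t _ => hderiv t)
    ((by fun_prop : Continuous fun t => 1 - exp ((t - 1) / a)).intervalIntegrable v w)]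
  ring

theorem sub_one_le_mul_sub_min_one {y s : ℝ} (hy₀ : 0 ≤ y) (hy₁ : y ≤ 1) :
    y - 1 ≤ y * s - min s 1 := by
  rcases le_total s 1 with hs | hs
  · rw [min_eq_left hs]; nlinarith
  · rw [min_eq_right hs]; nlinarith

section Exponential

variable {a : ℝ} (ha : 0 < a)
include ha

theorem exp_neg_one_div_lt_one : exp (-1 / a) < 1 :=
  exp_lt_one_iff.2 (div_neg_of_neg_of_pos (by norm_num) ha)

theorem max_one_sub_exp_sub_one_div_of_le_one {t : ℝ} (ht : t ≤ 1) :
    max (1 - exp ((t - 1) / a)) 0 = 1 - exp ((t - 1) / a) :=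
  max_eq_left <| sub_nonneg.2 <| exp_le_one_iff.2 <|
    div_nonpos_of_nonpos_of_nonneg (by linarith) ha.le

theorem max_one_sub_exp_sub_one_div_of_one_le {t : ℝ} (ht : 1 ≤ t) :
    max (1 - exp ((t - 1) / a)) 0 = 0 :=
  max_eq_right <| sub_nonpos.2 <| one_le_exp_iff.2 <| div_nonneg (by linarith) ha.le

theorem integral_max_one_sub_exp_of_le_one {u : ℝ} (hu : u ≤ 1) :
    ∫ t in (0 : ℝ)..u, max (1 - exp ((t - 1) / a)) 0 =
      u - a * (exp ((u - 1) / a) - exp (-1 / a)) := by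
  have hle_one {t : ℝ} (ht : t ∈ Set.uIcc 0 u) : t ≤ 1 :=
    (Set.mem_uIcc.1 ht).elim (fun h => h.2.trans hu) (fun h => h.2.trans zero_le_one)
  rw [intervalIntegral.integral_congr fun t ht =>
      max_one_sub_exp_sub_one_div_of_le_one ha (hle_one ht),
    integral_one_sub_exp_sub_one_div ha.ne', zero_sub, sub_zero]

theorem integral_max_one_sub_exp_of_one_le {u : ℝ} (hu : 1 ≤ u) :
    ∫ t in (0 : ℝ)..u, max (1 - exp ((t - 1) / a)) 0 = 1 - a * (1 - exp (-1 / a)) := by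
  have hint : Continuous fun t => max (1 - exp ((t - 1) / a)) 0 := by fun_prop
  rw [← intervalIntegral.integral_add_adjacent_intervals (hint.intervalIntegrable 0 1)
      (hint.intervalIntegrable 1 u),
    integral_max_one_sub_exp_of_le_one ha le_rfl,
    intervalIntegral.integral_congr (g := fun _ => 0) fun t ht =>
      max_one_sub_exp_sub_one_div_of_one_le ha (Set.uIcc_of_le hu ▸ ht).1]
  simp

end Exponential

noncomputable def adwordsScale (c : ℝ) : ℝ := (1 - exp (-1 / (c + 1)))⁻¹

noncomputable def adwordsSmoothing (c t : ℝ) : ℝ :=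
  adwordsScale c * max (1 - exp ((t - 1) / (1 + c))) 0

section Adwords

variable {c : ℝ} (hc : 0 < 1 + c)
include hc

theorem adwordsScale_pos : 0 < adwordsScale c := by
  rw [adwordsScale, add_comm c]
  exact inv_pos.2 (sub_pos.2 (exp_neg_one_div_lt_one hc))

theorem adwordsScale_mul : adwordsScale c * (1 - exp (-1 / (1 + c))) = 1 := by
  rw [adwordsScale, add_comm c]
  exact inv_mul_cancel₀ (sub_pos.2 (exp_neg_one_div_lt_one hc)).ne'

theorem adwordsSmoothing_nonneg (t : ℝ) : 0 ≤ adwordsSmoothing c t :=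
  mul_nonneg (adwordsScale_pos hc).le (le_max_right _ _)

theorem adwordsSmoothing_le_one {u : ℝ} (hu : 0 ≤ u) : adwordsSmoothing c u ≤ 1 := by
  rw [← adwordsScale_mul hc, adwordsSmoothing]
  gcongr
  · exact (adwordsScale_pos hc).le
  refine max_le ?_ (sub_nonneg.2 (exp_neg_one_div_lt_one hc).le)
  gcongr
  linarith

theorem integral_adwordsSmoothing_add_mul_one_sub (u : ℝ) :
    (∫ t in (0 : ℝ)..u, adwordsSmoothing c t) + c * (1 - adwordsSmoothing c u) =
      adwordsScale c * min u 1 + adwordsSmoothing c u - 1 := by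
  have hscale := adwordsScale_mul hc
  simp only [adwordsSmoothing, intervalIntegral.integral_const_mul]
  rcases le_total u 1 with hu | hu
  · rw [integral_max_one_sub_exp_of_le_one hc hu,
      max_one_sub_exp_sub_one_div_of_le_one hc hu, min_eq_left hu]
    linear_combination (-(1 + c)) * hscale
  · rw [integral_max_one_sub_exp_of_one_le hc hu,
      max_one_sub_exp_sub_one_div_of_one_le hc hu, min_eq_right hu]
    linear_combination (-(1 + c)) * hscale

end Adwords

/-- Optimal smoothing for adwords with the sequential algorithm:
`y(u) = β·(1 − e^{(u−1)/(1+c)})₊` with `β = (1 − e^{−1/(c+1)})⁻¹` is feasible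
for the sequential smoothing-design problem for `ψ(u) = min(u, 1)`. -/
theorem stmt_17 (c : ℝ) (hc : 0 ≤ c) :
    ∀ u ≥ (0:ℝ), ∀ s ≥ (0:ℝ),
      (∫ t in (0:ℝ)..u,
          (1 - Real.exp (-1 / (c + 1)))⁻¹ *
            max (1 - Real.exp ((t - 1) / (1 + c))) 0) +
          c * (1 - (1 - Real.exp (-1 / (c + 1)))⁻¹ *
            max (1 - Real.exp ((u - 1) / (1 + c))) 0) ≤
        (1 - Real.exp (-1 / (c + 1)))⁻¹ * min u 1 +
          ((1 - Real.exp (-1 / (c + 1)))⁻¹ *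
            max (1 - Real.exp ((u - 1) / (1 + c))) 0) * s - min s 1 := by
  intro u hu s _
  have hc' : 0 < 1 + c := by linarith
  calc (∫ t in (0 : ℝ)..u, adwordsSmoothing c t) + c * (1 - adwordsSmoothing c u)
      = adwordsScale c * min u 1 + adwordsSmoothing c u - 1 :=
        integral_adwordsSmoothing_add_mul_one_sub hc' u
    _ ≤ adwordsScale c * min u 1 + adwordsSmoothing c u * s - min s 1 := by
        linarith [sub_one_le_mul_sub_min_one (s := s) (adwordsSmoothing_nonneg hc' u)
          (adwordsSmoothing_le_one hc' hu)]
end
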